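/- Let π and π̃ be probability measures on a measurable space Ω, let F : Ω → ℝ be measurable with ‖F‖_∞ ≤ C_ab, and let δ ∈ [0, 1]. Let P be the Gibbs tilt of π by δF and P̃ the Gibbs tilt of π̃ by δF. Then ‖P − P̃‖_TV ≤ (2 e^{2δ C_ab} − e^{δ C_ab}) ‖π − π̃‖_TV ≤ (1 + C₂ δ) ‖π − π̃‖_TV, where C₂ := 4 C_ab e^{2 C_ab}. -/

import Mathlib

open MeasureTheory

/-- Total variation distance `(1/2) ∫ |dP/dλ − dQ/dλ| dλ` with the common
dominating measure `λ = P + Q`. -/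
noncomputable def tvDist {Ω : Type*} [MeasurableSpace Ω]
    (P Q : Measure Ω) : ℝ :=
  (1 / 2) * ∫ ω, |(P.rnDeriv (P + Q) ω).toReal
    - (Q.rnDeriv (P + Q) ω).toReal| ∂(P + Q)

/-- The Gibbs tilt of `π` by `G`: the probability measure with density
`e^G / ∫ e^G dπ` with respect to `π`. -/
noncomputable def gibbsTilt {Ω : Type*} [MeasurableSpace Ω]
    (π : Measure Ω) (G : Ω → ℝ) : Measure Ω :=
  π.withDensity fun ω =>
    ENNReal.ofReal (Real.exp (G ω) / ∫ ω', Real.exp (G ω') ∂π)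

/-! Write `λ = π + π'`, `p, p'` for the densities of `π, π'` and `g = e^{δF} ∈ [e^{-a}, e^a]`
with `a = δ C_ab`. The tilts have densities `g p / Z` and `g p' / Z'`, and
`g p / Z - g p' / Z' = (g / Z)(p - p') + (g p' / Z') (Z' - Z) / Z`,
so `‖P - P'‖_TV ≤ e^a (e^a ‖π - π'‖_TV + |Z - Z'| / 2)` since `Z ≥ e^{-a}`. Because `p - p'` has
integral zero, `Z - Z' = ∫ (g - cosh a)(p - p') dλ`, whence `|Z - Z'| ≤ 2 sinh a ‖π - π'‖_TV`.
The constant `e^a (e^a + sinh a) = (3e^{2a} - 1)/2` is at most `2e^{2a} - e^a`, and the linear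
bound follows from `e^x - 1 ≤ x e^x`. -/

open Real (exp exp_pos exp_le_exp sinh sinh_eq exp_neg)

section TotalVariation

variable {Ω : Type*} [MeasurableSpace Ω]

lemma tvDist_nonneg (P Q : Measure Ω) : 0 ≤ tvDist P Q := by
  unfold tvDist
  exact mul_nonneg (by norm_num) (integral_nonneg fun _ ↦ abs_nonneg _)

lemma tvDist_eq_of_absolutelyContinuous {P Q μ : Measure Ω} [IsFiniteMeasure P]
    [IsFiniteMeasure Q] [SigmaFinite μ] (hP : P ≪ μ) (hQ : Q ≪ μ) :
    tvDist P Q = 1 / 2 * ∫ x, |(P.rnDeriv μ x).toReal - (Q.rnDeriv μ x).toReal| ∂μ := by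
  have hPQ : P ≪ P + Q := Measure.absolutelyContinuous_of_le (Measure.le_add_right le_rfl)
  have hQP : Q ≪ P + Q := Measure.absolutelyContinuous_of_le (Measure.le_add_left le_rfl)
  rw [tvDist, ← integral_rnDeriv_smul (hP.add_left hQ)]
  congr 1
  refine integral_congr_ae ?_
  filter_upwards [Measure.rnDeriv_mul_rnDeriv (κ := μ) hPQ,
    Measure.rnDeriv_mul_rnDeriv (κ := μ) hQP] with x hPx hQx
  rw [smul_eq_mul, ← hPx, ← hQx, Pi.mul_apply, Pi.mul_apply, ENNReal.toReal_mul,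
    ENNReal.toReal_mul, ← sub_mul, abs_mul, abs_of_nonneg ENNReal.toReal_nonneg, mul_comm]

end TotalVariation

section ExpInequalities

lemma exp_sub_one_le_mul_exp (x : ℝ) : exp x - 1 ≤ x * exp x := by
  have h := mul_le_mul_of_nonneg_left (Real.one_sub_le_exp_neg x) (exp_pos x).le
  rw [← Real.exp_add, add_neg_cancel, Real.exp_zero] at h
  linarith

lemma exp_mul_exp_add_sinh_le (a : ℝ) : exp a * (exp a + sinh a) ≤ 2 * exp (2 * a) - exp a := by
  have h : exp a * exp (-a) = 1 := by rw [← Real.exp_add, add_neg_cancel, Real.exp_zero]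
  rw [sinh_eq, show 2 * a = a + a by ring, Real.exp_add]
  nlinarith [sq_nonneg (exp a - 1)]

lemma two_mul_exp_two_mul_sub_exp_le {C δ : ℝ} (hC : 0 ≤ C) (hδ0 : 0 ≤ δ) (hδ1 : δ ≤ 1) :
    2 * exp (2 * δ * C) - exp (δ * C) ≤ 1 + 4 * C * exp (2 * C) * δ := by
  have h1 : 1 ≤ exp (δ * C) := Real.one_le_exp (mul_nonneg hδ0 hC)
  have h2 := exp_sub_one_le_mul_exp (2 * δ * C)
  have h3 : exp (2 * δ * C) ≤ exp (2 * C) := exp_le_exp.2 (by nlinarith)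
  nlinarith [mul_le_mul_of_nonneg_left h3 (by positivity : 0 ≤ 2 * δ * C)]

end ExpInequalities

section DensityBounds

variable {Ω : Type*} [MeasurableSpace Ω] {μ : Measure Ω} {p q g : Ω → ℝ}

lemma abs_integral_mul_sub_integral_mul_le (hp : Integrable p μ) (hq : Integrable q μ)
    (hpq : ∫ x, p x ∂μ = ∫ x, q x ∂μ) (hg : AEStronglyMeasurable g μ) {m M : ℝ}
    (hm : ∀ x, m ≤ g x) (hM : ∀ x, g x ≤ M) :
    |∫ x, g x * p x ∂μ - ∫ x, g x * q x ∂μ| ≤ (M - m) / 2 * ∫ x, |p x - q x| ∂μ := by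
  set c := (m + M) / 2 with hc
  have hgc : ∀ x, ‖g x - c‖ ≤ (M - m) / 2 := fun x ↦ by
    rw [Real.norm_eq_abs, abs_le, hc]; constructor <;> linarith [hm x, hM x]
  have hgp : Integrable (fun x ↦ g x * p x) μ :=
    hp.bdd_mul hg (ae_of_all _ fun x ↦ abs_le_max_abs_abs (hm x) (hM x))
  have hgq : Integrable (fun x ↦ g x * q x) μ :=
    hq.bdd_mul hg (ae_of_all _ fun x ↦ abs_le_max_abs_abs (hm x) (hM x))
  have hcentre : ∫ x, g x * p x ∂μ - ∫ x, g x * q x ∂μ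
      = ∫ x, (g x - c) * (p x - q x) ∂μ := by
    have hmean : ∫ x, c * (p x - q x) ∂μ = 0 := by
      rw [integral_const_mul, integral_sub hp hq, hpq, sub_self, mul_zero]
    calc ∫ x, g x * p x ∂μ - ∫ x, g x * q x ∂μ
        = ∫ x, g x * p x - g x * q x ∂μ - ∫ x, c * (p x - q x) ∂μ := by
          rw [hmean, sub_zero, integral_sub hgp hgq]
      _ = ∫ x, (g x * p x - g x * q x) - c * (p x - q x) ∂μ :=
          (integral_sub (hgp.sub hgq) ((hp.sub hq).const_mul c)).symm
      _ = ∫ x, (g x - c) * (p x - q x) ∂μ := integral_congr_ae (ae_of_all _ fun x ↦ by ring)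
  rw [hcentre, ← Real.norm_eq_abs, ← integral_const_mul]
  refine norm_integral_le_of_norm_le ((hp.sub hq).abs.const_mul _) (ae_of_all _ fun x ↦ ?_)
  rw [norm_mul, Real.norm_eq_abs (p x - q x)]
  exact mul_le_mul_of_nonneg_right (hgc x) (abs_nonneg _)

lemma integral_abs_div_sub_div_le (hp : Integrable p μ) (hq : Integrable q μ)
    (hq0 : ∀ x, 0 ≤ q x) (hg : AEStronglyMeasurable g μ) {M : ℝ} (hg0 : ∀ x, 0 ≤ g x)
    (hM : ∀ x, g x ≤ M) {Z : ℝ} (hZ : 0 < Z) (hZq : 0 < ∫ x, g x * q x ∂μ) :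
    ∫ x, |g x / Z * p x - g x / (∫ y, g y * q y ∂μ) * q x| ∂μ
      ≤ (M * ∫ x, |p x - q x| ∂μ + |Z - ∫ x, g x * q x ∂μ|) / Z := by
  set Zq := ∫ x, g x * q x ∂μ
  have hpq : Integrable (fun x ↦ |p x - q x|) μ := (hp.sub hq).abs
  have hgq : Integrable (fun x ↦ g x * q x) μ :=
    hq.bdd_mul hg (ae_of_all _ fun x ↦ by rw [Real.norm_eq_abs, abs_of_nonneg (hg0 x)]; exact hM x)
  have hdom : Integrable (fun x ↦ (M * |p x - q x| + |Z - Zq| * (g x * q x / Zq)) / Z) μ :=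
    ((hpq.const_mul M).add ((hgq.div_const Zq).const_mul _)).div_const Z
  have hsplit : ∀ x, g x / Z * p x - g x / Zq * q x
      = (g x * (p x - q x) + (g x * q x / Zq) * (Zq - Z)) / Z := fun x ↦ by
    field_simp [hZq.ne']; ring
  calc ∫ x, |g x / Z * p x - g x / Zq * q x| ∂μ
      ≤ ∫ x, (M * |p x - q x| + |Z - Zq| * (g x * q x / Zq)) / Z ∂μ := by
        refine integral_mono_of_nonneg (ae_of_all _ fun x ↦ abs_nonneg _) hdom
          (ae_of_all _ fun x ↦ ?_)
        have hw : 0 ≤ g x * q x / Zq := div_nonneg (mul_nonneg (hg0 x) (hq0 x)) hZq.le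
        dsimp only
        rw [hsplit, abs_div, abs_of_pos hZ]
        gcongr
        refine (abs_add_le _ _).trans (add_le_add ?_ ?_)
        · rw [abs_mul, abs_of_nonneg (hg0 x)]
          exact mul_le_mul_of_nonneg_right (hM x) (abs_nonneg _)
        · rw [abs_mul, abs_of_nonneg hw, abs_sub_comm, mul_comm]
    _ = (M * ∫ x, |p x - q x| ∂μ + |Z - Zq|) / Z := by
        rw [integral_div, integral_add (hpq.const_mul M)
          ((hgq.div_const Zq).const_mul _), integral_const_mul, integral_const_mul,
          integral_div, div_self hZq.ne', mul_one]

end DensityBounds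

section Tilting

variable {Ω : Type*} [MeasurableSpace Ω] {G : Ω → ℝ} {a : ℝ}

lemma gibbsTilt_eq_tilted (π : Measure Ω) (G : Ω → ℝ) : gibbsTilt π G = π.tilted G := rfl

lemma exp_neg_le_integral_exp (π : Measure Ω) [IsProbabilityMeasure π] (hG : Measurable G)
    (hGa : ∀ ω, |G ω| ≤ a) : exp (-a) ≤ ∫ ω, exp (G ω) ∂π := by
  have hint : Integrable (fun ω ↦ exp (G ω)) π :=
    .of_bound hG.exp.aestronglyMeasurable (exp a) (ae_of_all _ fun ω ↦ by
      rw [Real.norm_eq_abs, abs_of_pos (exp_pos _)]; exact exp_le_exp.2 (le_of_abs_le (hGa ω)))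
  calc exp (-a) = ∫ _, exp (-a) ∂π := by simp
    _ ≤ ∫ ω, exp (G ω) ∂π :=
      integral_mono (integrable_const _) hint fun ω ↦ exp_le_exp.2 (neg_le_of_abs_le (hGa ω))

lemma tvDist_tilted_le (π π' : Measure Ω) [IsProbabilityMeasure π] [IsProbabilityMeasure π']
    (hG : Measurable G) (hGa : ∀ ω, |G ω| ≤ a) :
    tvDist (π.tilted G) (π'.tilted G) ≤ exp a * (exp a + sinh a) * tvDist π π' := by
  set μ := π + π'
  have hπ : π ≪ μ := Measure.absolutelyContinuous_of_le (Measure.le_add_right le_rfl)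
  have hπ' : π' ≪ μ := Measure.absolutelyContinuous_of_le (Measure.le_add_left le_rfl)
  rw [tvDist_eq_of_absolutelyContinuous ((tilted_absolutelyContinuous π G).trans hπ)
      ((tilted_absolutelyContinuous π' G).trans hπ'), tvDist,
    integral_congr_ae (by
      filter_upwards [toReal_rnDeriv_tilted_left π hG.aemeasurable,
        toReal_rnDeriv_tilted_left π' hG.aemeasurable] with x hx hx'
      rw [hx, hx'])]
  set p := fun x ↦ (π.rnDeriv μ x).toReal
  set q := fun x ↦ (π'.rnDeriv μ x).toReal
  set g := fun x ↦ exp (G x)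
  have hp : Integrable p μ := Measure.integrable_toReal_rnDeriv
  have hq : Integrable q μ := Measure.integrable_toReal_rnDeriv
  have hpq : ∫ x, p x ∂μ = ∫ x, q x ∂μ := by
    simp only [p, q, Measure.integral_toReal_rnDeriv hπ, Measure.integral_toReal_rnDeriv hπ',
      probReal_univ]
  have hg_lo : ∀ x, exp (-a) ≤ g x := fun x ↦ exp_le_exp.2 (neg_le_of_abs_le (hGa x))
  have hg_hi : ∀ x, g x ≤ exp a := fun x ↦ exp_le_exp.2 (le_of_abs_le (hGa x))
  have hZ : ∫ ω, g ω ∂π = ∫ x, g x * p x ∂μ := by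
    rw [← integral_rnDeriv_smul hπ]; simp only [smul_eq_mul, mul_comm, p]
  have hZ' : ∫ ω, g ω ∂π' = ∫ x, g x * q x ∂μ := by
    rw [← integral_rnDeriv_smul hπ']; simp only [smul_eq_mul, mul_comm, q]
  have hZ_lo : exp (-a) ≤ ∫ ω, g ω ∂π := exp_neg_le_integral_exp π hG hGa
  have hZ'_pos : 0 < ∫ x, g x * q x ∂μ :=
    hZ' ▸ (exp_pos _).trans_le (exp_neg_le_integral_exp π' hG hGa)
  have hosc := abs_integral_mul_sub_integral_mul_le hp hq hpq hG.exp.aestronglyMeasurable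
    hg_lo hg_hi
  have htilt := integral_abs_div_sub_div_le hp hq (fun _ ↦ ENNReal.toReal_nonneg)
    hG.exp.aestronglyMeasurable (fun _ ↦ (exp_pos _).le) hg_hi
    ((exp_pos _).trans_le hZ_lo) hZ'_pos
  set Z := ∫ ω, g ω ∂π
  set E := ∫ x, |p x - q x| ∂μ
  have hdiff : |Z - ∫ x, g x * q x ∂μ| ≤ sinh a * E := by rw [hZ, sinh_eq]; exact hosc
  have hnum : 0 ≤ exp a * E + |Z - ∫ x, g x * q x ∂μ| := by positivity
  rw [hZ']
  calc _ ≤ 1 / 2 * ((exp a * E + |Z - ∫ x, g x * q x ∂μ|) / Z) :=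
        mul_le_mul_of_nonneg_left htilt (by norm_num)
    _ ≤ 1 / 2 * ((exp a * E + sinh a * E) / exp (-a)) := by
        gcongr
        exact hnum.trans (by gcongr)
    _ = exp a * (exp a + sinh a) * (1 / 2 * E) := by rw [exp_neg, div_inv_eq_mul]; ring

end Tilting

/-- Propagation of sampling error through a frozen tilting step: tilting two
probability measures by the same bounded weight `δF`, `‖F‖_∞ ≤ C_ab`,
`δ ∈ [0,1]`, amplifies their total variation distance by at most
`2e^{2δC_ab} − e^{δC_ab} ≤ 1 + C₂ δ`, `C₂ = 4 C_ab e^{2C_ab}`. -/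
theorem tilting_error_propagation
    {Ω : Type*} [MeasurableSpace Ω]
    (π π' : Measure Ω) [IsProbabilityMeasure π] [IsProbabilityMeasure π']
    (F : Ω → ℝ) (hFm : Measurable F)
    (Cab : ℝ) (hFb : ∀ ω, |F ω| ≤ Cab)
    (δ : ℝ) (hδ0 : 0 ≤ δ) (hδ1 : δ ≤ 1) :
    tvDist (gibbsTilt π fun ω => δ * F ω) (gibbsTilt π' fun ω => δ * F ω)
      ≤ (2 * Real.exp (2 * δ * Cab) - Real.exp (δ * Cab)) * tvDist π π'
    ∧ (2 * Real.exp (2 * δ * Cab) - Real.exp (δ * Cab)) * tvDist π π'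
      ≤ (1 + (4 * Cab * Real.exp (2 * Cab)) * δ) * tvDist π π' := by
  have hCab : 0 ≤ Cab := (abs_nonneg _).trans (hFb (nonempty_of_isProbabilityMeasure π).some)
  have hδF : ∀ ω, |δ * F ω| ≤ δ * Cab := fun ω ↦ by
    rw [abs_mul, abs_of_nonneg hδ0]; exact mul_le_mul_of_nonneg_left (hFb ω) hδ0
  have hTV := tvDist_nonneg π π'
  rw [gibbsTilt_eq_tilted, gibbsTilt_eq_tilted]
  refine ⟨(tvDist_tilted_le π π' (hFm.const_mul δ) hδF).trans ?_, ?_⟩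
  · gcongr
    simpa only [mul_assoc] using exp_mul_exp_add_sinh_le (δ * Cab)
  · gcongr
    exact two_mul_exp_two_mul_sub_exp_le hCab hδ0 hδ1
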